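/- For all τ ∈ ℍ and all z = (z₁,…,z₁₂) ∈ ℂ^{12} one has φ11(τ/2 + 1/2, z) = −φ00(τ,z)·φ11(τ,z), where τ/2 + 1/2 ∈ ℍ. -/

import Mathlib

open Complex

/-- `ee w = exp(2πiw)`; thus `q^r = ee (r·τ)` and `ζ^r = ee (r·u)`. -/
noncomputable def ee (w : ℂ) : ℂ := Complex.exp (2 * Real.pi * Complex.I * w)

/-- The Dedekind eta function `η(τ) = q^{1/24} ∏_{n≥1} (1 − qⁿ)`. -/
noncomputable def dedekindEta (τ : UpperHalfPlane) : ℂ :=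
  ee ((τ : ℂ) / 24) * ∏' n : ℕ, (1 - ee (((n : ℂ) + 1) * (τ : ℂ)))

/-- `ϑ11(τ,u) = −q^{1/8} ζ^{−1/2} ∏_{n≥1} (1−q^{n−1}ζ)(1−qⁿζ^{−1})(1−qⁿ)`. -/
noncomputable def th11 (τ : UpperHalfPlane) (u : ℂ) : ℂ :=
  -(ee ((τ : ℂ) / 8) * ee (-u / 2)) *
    ∏' n : ℕ, ((1 - ee ((n : ℂ) * (τ : ℂ)) * ee u) *
      (1 - ee (((n : ℂ) + 1) * (τ : ℂ)) * ee (-u)) * (1 - ee (((n : ℂ) + 1) * (τ : ℂ))))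

/-- `ϑ00(τ,u) = ∏_{n≥1} (1−qⁿ)(1+q^{n−1/2}ζ)(1+q^{n−1/2}ζ^{−1})`. -/
noncomputable def th00 (τ : UpperHalfPlane) (u : ℂ) : ℂ :=
  ∏' n : ℕ, ((1 - ee (((n : ℂ) + 1) * (τ : ℂ))) *
    (1 + ee (((n : ℂ) + 1 / 2) * (τ : ℂ)) * ee u) *
    (1 + ee (((n : ℂ) + 1 / 2) * (τ : ℂ)) * ee (-u)))

/-- `φ00(τ,z) = η(τ)^{−12} ∏_{j=1}^{12} ϑ00(τ,z_j)`. -/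
noncomputable def phi00 (τ : UpperHalfPlane) (z : Fin 12 → ℂ) : ℂ :=
  (dedekindEta τ ^ 12)⁻¹ * ∏ j, th00 τ (z j)

/-- `φ11(τ,z) = η(τ)^{−12} ∏_{j=1}^{12} ϑ11(τ,z_j)`. -/
noncomputable def phi11 (τ : UpperHalfPlane) (z : Fin 12 → ℂ) : ℂ :=
  (dedekindEta τ ^ 12)⁻¹ * ∏ j, th11 τ (z j)

/-- `τ/2 + 1/2` as a point of the upper half-plane. -/
noncomputable def halfAddH (τ : UpperHalfPlane) : UpperHalfPlane :=
  ⟨(τ : ℂ) / 2 + 1 / 2, by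
    have h := τ.im_pos
    rw [Complex.add_im, Complex.div_im]
    simp [UpperHalfPlane.coe_im]
    positivity⟩

/-! The nome of `τ/2 + 1/2` is `-x` with `x = e(τ/2)`, and splitting a product `∏ (1 - a (-x)ⁿ)`
into its even and odd factors rewrites `ϑ11(τ/2 + 1/2, u)` and `η(τ/2 + 1/2)` as products in
`q = x²`. Comparing with the product formulas of `ϑ00(τ, u)`, `ϑ11(τ, u)` and `η(τ)` gives
`ϑ11(τ/2 + 1/2, u) / η(τ/2 + 1/2) = e(1/24) · ϑ00(τ, u)/η(τ) · ϑ11(τ, u)/η(τ)` for every `u`,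
and over the twelve coordinates the constant becomes `e(1/24)¹² = e(1/2) = -1`. -/

open scoped UpperHalfPlane

section QPochhammer

variable {𝕜 : Type*} [NormedField 𝕜] {q : 𝕜}

/-- The `q`-Pochhammer symbol `(a; q)_∞ = ∏_{n ≥ 0} (1 - a qⁿ)`. -/
noncomputable def qPochhammer (a q : 𝕜) : 𝕜 := ∏' n : ℕ, (1 - a * q ^ n)

lemma summable_norm_mul_pow (a : 𝕜) (hq : ‖q‖ < 1) : Summable fun n : ℕ ↦ ‖a * q ^ n‖ := by
  simpa only [norm_mul, norm_pow] using
    (summable_geometric_of_lt_one (norm_nonneg q) hq).mul_left ‖a‖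

variable [CompleteSpace 𝕜]

lemma multipliable_one_sub_mul_pow (a : 𝕜) (hq : ‖q‖ < 1) :
    Multipliable fun n : ℕ ↦ 1 - a * q ^ n := by
  simpa only [sub_eq_add_neg, norm_neg] using
    multipliable_one_add_of_summable (f := fun n : ℕ ↦ -(a * q ^ n))
      (by simpa only [norm_neg] using summable_norm_mul_pow a hq)

lemma qPochhammer_ne_zero {a : 𝕜} (ha : ‖a‖ < 1) (hq : ‖q‖ < 1) : qPochhammer a q ≠ 0 := by
  have hlt (n : ℕ) : ‖a * q ^ n‖ < 1 := by
    rw [norm_mul, norm_pow]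
    exact mul_lt_one_of_nonneg_of_lt_one_left (norm_nonneg a) ha
      (pow_le_one₀ (norm_nonneg q) hq.le)
  simpa only [qPochhammer, sub_eq_add_neg] using
    tprod_one_add_ne_zero_of_summable (f := fun n : ℕ ↦ -(a * q ^ n))
      (fun n h ↦ by simpa [show a * q ^ n = 1 by linear_combination -h] using hlt n)
      (by simpa only [norm_neg] using summable_norm_mul_pow a hq)

lemma qPochhammer_mul_mul (a b c : 𝕜) (hq : ‖q‖ < 1) :
    ∏' n : ℕ, ((1 - a * q ^ n) * (1 - b * q ^ n) * (1 - c * q ^ n)) =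
      qPochhammer a q * qPochhammer b q * qPochhammer c q := by
  have ha := multipliable_one_sub_mul_pow a hq
  have hb := multipliable_one_sub_mul_pow b hq
  rw [(ha.mul hb).tprod_mul (multipliable_one_sub_mul_pow c hq), ha.tprod_mul hb]
  rfl

lemma qPochhammer_neg (a : 𝕜) {x : 𝕜} (hx : ‖x‖ < 1) :
    qPochhammer a (-x) = qPochhammer a (x ^ 2) * qPochhammer (-(a * x)) (x ^ 2) := by
  have hx2 : ‖x ^ 2‖ < 1 := by
    rw [norm_pow]; exact pow_lt_one₀ (norm_nonneg x) hx two_ne_zero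
  have heven (k : ℕ) : 1 - a * (-x) ^ (2 * k) = 1 - a * (x ^ 2) ^ k := by
    rw [pow_mul, neg_sq]
  have hodd (k : ℕ) : 1 - a * (-x) ^ (2 * k + 1) = 1 - -(a * x) * (x ^ 2) ^ k := by
    rw [pow_succ, pow_mul, neg_sq]; ring
  rw [qPochhammer, ← tprod_even_mul_odd (f := fun n ↦ 1 - a * (-x) ^ n)]
  · simp only [heven, hodd]; rfl
  · simpa only [heven] using multipliable_one_sub_mul_pow a hx2
  · simpa only [hodd] using multipliable_one_sub_mul_pow _ hx2

end QPochhammer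

lemma ee_add (a b : ℂ) : ee (a + b) = ee a * ee b := by
  simp only [ee, mul_add, Complex.exp_add]

lemma ee_ne_zero (w : ℂ) : ee w ≠ 0 := Complex.exp_ne_zero _

lemma ee_nat_mul (n : ℕ) (a : ℂ) : ee (n * a) = ee a ^ n := by
  rw [ee, ee, ← Complex.exp_nat_mul]; ring_nf

lemma ee_half : ee (1 / 2) = -1 := by
  rw [ee, show 2 * (Real.pi : ℂ) * I * (1 / 2) = Real.pi * I by ring, Complex.exp_pi_mul_I]

lemma norm_ee (w : ℂ) : ‖ee w‖ = Real.exp (-(2 * Real.pi * w.im)) := by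
  rw [ee, Complex.norm_exp]
  simp [Complex.mul_re, Complex.mul_im]

lemma norm_ee_lt_one {w : ℂ} (hw : 0 < w.im) : ‖ee w‖ < 1 := by
  rw [norm_ee, Real.exp_lt_one_iff, neg_lt_zero]
  positivity

section

variable (τ : ℍ)

lemma norm_ee_div_two_lt_one : ‖ee ((τ : ℂ) / 2)‖ < 1 :=
  norm_ee_lt_one (by simpa using τ.im_pos)

lemma ee_eq_ee_div_two_sq : ee (τ : ℂ) = ee ((τ : ℂ) / 2) ^ 2 := by
  rw [← ee_nat_mul]; push_cast; ring_nf

lemma coe_halfAddH : (halfAddH τ : ℂ) = τ / 2 + 1 / 2 := rfl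

lemma ee_halfAddH : ee (halfAddH τ : ℂ) = -ee ((τ : ℂ) / 2) := by
  rw [coe_halfAddH, ee_add, ee_half, mul_neg_one]

lemma dedekindEta_eq_qPochhammer :
    dedekindEta τ = ee ((τ : ℂ) / 24) * qPochhammer (ee τ) (ee τ) := by
  rw [dedekindEta, qPochhammer]
  congr 1
  refine tprod_congr fun n ↦ ?_
  rw [add_mul, one_mul, ee_add, ee_nat_mul]; ring

lemma th11_eq_qPochhammer (u : ℂ) :
    th11 τ u = -(ee ((τ : ℂ) / 8) * ee (-u / 2)) *
      (qPochhammer (ee u) (ee τ) * qPochhammer (ee τ * ee (-u)) (ee τ) *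
        qPochhammer (ee τ) (ee τ)) := by
  rw [th11, ← qPochhammer_mul_mul _ _ _ (norm_ee_lt_one τ.im_pos)]
  congr 1
  refine tprod_congr fun n ↦ ?_
  rw [add_mul, one_mul, ee_add, ee_nat_mul]; ring

lemma th00_eq_qPochhammer (u : ℂ) :
    th00 τ u = qPochhammer (ee τ) (ee τ) * qPochhammer (-(ee u * ee ((τ : ℂ) / 2))) (ee τ) *
      qPochhammer (-(ee (-u) * ee ((τ : ℂ) / 2))) (ee τ) := by
  rw [th00, ← qPochhammer_mul_mul _ _ _ (norm_ee_lt_one τ.im_pos)]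
  refine tprod_congr fun n ↦ ?_
  rw [add_mul, one_mul, add_mul, one_div_mul_eq_div, ee_add, ee_add, ee_nat_mul]; ring

lemma dedekindEta_halfAddH :
    dedekindEta (halfAddH τ) = ee ((halfAddH τ : ℂ) / 24) *
      qPochhammer (-ee ((τ : ℂ) / 2)) (ee τ) * qPochhammer (ee τ) (ee τ) := by
  rw [dedekindEta_eq_qPochhammer, ee_halfAddH,
    qPochhammer_neg _ (norm_ee_div_two_lt_one τ), neg_mul, neg_neg, ← sq, ← ee_eq_ee_div_two_sq,
    mul_assoc]

lemma th11_halfAddH_mul (u : ℂ) :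
    th11 (halfAddH τ) u * qPochhammer (ee τ) (ee τ) =
      ee ((halfAddH τ : ℂ) / 8 - τ / 8) * qPochhammer (-ee ((τ : ℂ) / 2)) (ee τ) *
        th11 τ u * th00 τ u := by
  set x := ee ((τ : ℂ) / 2)
  have hx : ‖x‖ < 1 := norm_ee_div_two_lt_one τ
  have hq : -(-x * x) = ee τ := by rw [ee_eq_ee_div_two_sq]; ring
  have hqζ : -(-x * ee (-u) * x) = ee τ * ee (-u) := by rw [ee_eq_ee_div_two_sq]; ring
  have hxζ : -x * ee (-u) = -(ee (-u) * x) := by ring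
  have hprefactor :
      ee ((halfAddH τ : ℂ) / 8) = ee ((halfAddH τ : ℂ) / 8 - τ / 8) * ee (τ / 8) := by
    rw [← ee_add, sub_add_cancel]
  rw [th11_eq_qPochhammer, ee_halfAddH, th11_eq_qPochhammer, th00_eq_qPochhammer,
    qPochhammer_neg _ hx, qPochhammer_neg _ hx, qPochhammer_neg _ hx, ← ee_eq_ee_div_two_sq,
    hq, hqζ, hxζ, hprefactor]
  ring

lemma th11_div_dedekindEta_halfAddH (u : ℂ) :
    th11 (halfAddH τ) u / dedekindEta (halfAddH τ) =
      ee (1 / 24) * (th00 τ u / dedekindEta τ) * (th11 τ u / dedekindEta τ) := by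
  have hq := norm_ee_lt_one τ.im_pos
  have hqq : qPochhammer (ee τ) (ee τ) ≠ 0 := qPochhammer_ne_zero hq hq
  have hxq : qPochhammer (-ee ((τ : ℂ) / 2)) (ee τ) ≠ 0 :=
    qPochhammer_ne_zero (by rw [norm_neg]; exact norm_ee_div_two_lt_one τ) hq
  have hconst : ee ((halfAddH τ : ℂ) / 8 - τ / 8) * ee ((τ : ℂ) / 24) ^ 2 =
      ee (1 / 24) * ee ((halfAddH τ : ℂ) / 24) := by
    rw [sq, ← ee_add, ← ee_add, ← ee_add, coe_halfAddH]; congr 1; ring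
  rw [dedekindEta_halfAddH, dedekindEta_eq_qPochhammer]
  field_simp [ee_ne_zero]
  linear_combination ee ((τ : ℂ) / 24) ^ 2 * th11_halfAddH_mul τ u +
    qPochhammer (-ee ((τ : ℂ) / 2)) (ee τ) * th11 τ u * th00 τ u * hconst

end

lemma ee_one_div_twentyFour_pow_twelve : ee (1 / 24) ^ 12 = -1 := by
  rw [← ee_nat_mul, ← ee_half]; norm_num

lemma phi00_eq_prod_div (τ : ℍ) (z : Fin 12 → ℂ) :
    phi00 τ z = ∏ j, th00 τ (z j) / dedekindEta τ := by
  rw [phi00, Finset.prod_div_distrib, Finset.prod_const, Finset.card_fin, inv_mul_eq_div]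

lemma phi11_eq_prod_div (τ : ℍ) (z : Fin 12 → ℂ) :
    phi11 τ z = ∏ j, th11 τ (z j) / dedekindEta τ := by
  rw [phi11, Finset.prod_div_distrib, Finset.prod_const, Finset.card_fin, inv_mul_eq_div]

/-- The identity `φ11(τ/2 + 1/2, z) = −φ00(τ,z) · φ11(τ,z)`. -/
theorem phi11_half_shift (τ : UpperHalfPlane) (z : Fin 12 → ℂ) :
    phi11 (halfAddH τ) z = -(phi00 τ z * phi11 τ z) := by
  simp only [phi11_eq_prod_div, phi00_eq_prod_div, th11_div_dedekindEta_halfAddH,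
    Finset.prod_mul_distrib, Finset.prod_const, Finset.card_fin, ee_one_div_twentyFour_pow_twelve]
  ring
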